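/- arXiv:1309.1248 — 8 statements merged into one kernel-verified Lean document; each statement's English description precedes it below -/
import Mathlib

section
/- Let G be a finite simple graph with a bound assignment, and let ◀ be a linear ordering of the connected components of G that extends ◀′, i.e., for distinct connected components C, C′, if C ◀′ C′ then C ◀ C′. Then G has a bounded proper interval representation in which, whenever C ◀ C′, the component C is placed entirely to the left of C′, if and only if G has a bounded proper interval representation. -/
open Set

private theorem bounded_proper_rep_aux_rev
    {V : Type*} [Fintype V] (G : SimpleGraph V)
    (Ll Lr Rl Rr : V → ℝ)
    (hL : ∀ v, Ll v ≤ Lr v) (hR : ∀ v, Rl v ≤ Rr v)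
    (hLR₁ : ∀ v, Ll v ≤ Rl v) (hLR₂ : ∀ v, Lr v ≤ Rr v)
    (blt : G.ConnectedComponent → G.ConnectedComponent → Prop)
    (h_total : ∀ C C', C ≠ C' → blt C C' ∨ blt C' C)
    (h_asymm : ∀ C C', blt C C' → ¬ blt C' C)
    (h_trans : ∀ A B C, blt A B → blt B C → blt A C)
    (h_ext : ∀ C C' : G.ConnectedComponent, C ≠ C' →
        (∃ u ∈ C.supp, ∃ v ∈ C'.supp, Lr u ≤ Rl v) → blt C C')
    (l r : V → ℝ)
    (h1 : ∀ v, l v ≤ r v)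
    (h2 : ∀ u v, u ≠ v → (G.Adj u v ↔ (Icc (l u) (r u) ∩ Icc (l v) (r v)).Nonempty))
    (h3 : ∀ u v : V, ¬ Icc (l u) (r u) ⊂ Icc (l v) (r v))
    (h4 : ∀ v, l v ∈ Icc (Ll v) (Lr v)) (h5 : ∀ v, r v ∈ Icc (Rl v) (Rr v)) :
    (∃ l r : V → ℝ,
        (∀ v, l v ≤ r v) ∧
        (∀ u v, u ≠ v → (G.Adj u v ↔ (Icc (l u) (r u) ∩ Icc (l v) (r v)).Nonempty)) ∧
        (∀ u v : V, ¬ Icc (l u) (r u) ⊂ Icc (l v) (r v)) ∧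
        (∀ v, l v ∈ Icc (Ll v) (Lr v)) ∧ (∀ v, r v ∈ Icc (Rl v) (Rr v)) ∧
        (∀ C C' : G.ConnectedComponent, blt C C' →
          ∀ u ∈ C.supp, ∀ w ∈ C'.supp, r u < l w)) := by
  classical
  rcases isEmpty_or_nonempty V with hV | hV
  · exact ⟨l, r, h1, h2, h3, h4, h5, fun C C' _ u _ _ _ => isEmptyElim u⟩
  haveI : Fintype G.ConnectedComponent :=
    Fintype.ofSurjective (G.connectedComponentMk) (fun C => C.exists_rep)
  have hsne : ∀ C : G.ConnectedComponent,
      (Finset.univ.filter (fun v => G.connectedComponentMk v = C)).Nonempty := by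
    intro C
    obtain ⟨v, hv⟩ := C.exists_rep
    exact ⟨v, by simp only [Finset.mem_filter, Finset.mem_univ, true_and]; exact hv⟩
  obtain ⟨m, hm⟩ : ∃ f : G.ConnectedComponent → ℝ, ∀ C,
      f C = (Finset.univ.filter (fun v => G.connectedComponentMk v = C)).inf' (hsne C) Lr :=
    ⟨_, fun _ => rfl⟩
  obtain ⟨M, hM⟩ : ∃ f : G.ConnectedComponent → ℝ, ∀ C,
      f C = (Finset.univ.filter (fun v => G.connectedComponentMk v = C)).sup' (hsne C) Rl :=
    ⟨_, fun _ => rfl⟩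
  have hMv : ∀ v, Rl v ≤ M (G.connectedComponentMk v) := by
    intro v
    rw [hM]
    exact Finset.le_sup' Rl (Finset.mem_filter.mpr ⟨Finset.mem_univ v, (rfl : G.connectedComponentMk v = G.connectedComponentMk v)⟩)
  have hmv : ∀ v, m (G.connectedComponentMk v) ≤ Lr v := by
    intro v
    rw [hm]
    exact Finset.inf'_le Lr (Finset.mem_filter.mpr ⟨Finset.mem_univ v, (rfl : G.connectedComponentMk v = G.connectedComponentMk v)⟩)
  have gap : ∀ B C, blt B C → M B < m C := by
    intro B C hBC
    have hne : C ≠ B := by rintro rfl; exact h_asymm _ _ hBC hBC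
    have hnex : ¬ (∃ u ∈ C.supp, ∃ v ∈ B.supp, Lr u ≤ Rl v) :=
      fun hx => h_asymm _ _ (h_ext C B hne hx) hBC
    push_neg at hnex
    rw [hM, hm, Finset.sup'_lt_iff]
    intro v hv
    rw [Finset.lt_inf'_iff]
    intro u hu
    simp only [Finset.mem_filter, Finset.mem_univ, true_and] at hv hu
    exact hnex u hu v hv
  -- the minimal gap γ
  obtain ⟨γ, hγ⟩ : ∃ g : ℝ, g = (insert (1:ℝ)
      ((Finset.univ.filter (fun p : G.ConnectedComponent × G.ConnectedComponent =>
        blt p.1 p.2)).image (fun p => m p.2 - M p.1))).min'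
        ⟨1, Finset.mem_insert_self _ _⟩ := ⟨_, rfl⟩
  have γpos : 0 < γ := by
    rw [hγ]
    have hmem := Finset.min'_mem (insert (1:ℝ)
      ((Finset.univ.filter (fun p : G.ConnectedComponent × G.ConnectedComponent =>
        blt p.1 p.2)).image (fun p => m p.2 - M p.1))) ⟨1, Finset.mem_insert_self _ _⟩
    rcases Finset.mem_insert.mp hmem with h | h
    · rw [h]; norm_num
    · obtain ⟨p, hp, hpe⟩ := Finset.mem_image.mp h
      simp only [Finset.mem_filter, Finset.mem_univ, true_and] at hp
      rw [← hpe]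
      linarith [gap p.1 p.2 hp]
  have γle : ∀ B C, blt B C → γ ≤ m C - M B := by
    intro B C hBC
    rw [hγ]
    exact Finset.min'_le _ _ (Finset.mem_insert_of_mem
      (Finset.mem_image.mpr ⟨(B, C), by simp [hBC], rfl⟩))
  obtain ⟨k, hk⟩ : ∃ k : ℝ, k = (Fintype.card G.ConnectedComponent : ℝ) := ⟨_, rfl⟩
  have hk0 : 0 ≤ k := by rw [hk]; positivity
  obtain ⟨ε, hε⟩ : ∃ e : ℝ, e = γ / (4 * (k + 1)) := ⟨_, rfl⟩
  obtain ⟨δ, hδ⟩ : ∃ d : ℝ, d = ε / 4 := ⟨_, rfl⟩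
  have εpos : 0 < ε := by rw [hε]; positivity
  have δpos : 0 < δ := by rw [hδ]; positivity
  have hεk1 : ε * (k + 1) = γ / 4 := by rw [hε]; field_simp
  have hεk : ε * k ≤ γ / 4 := by linarith only [hεk1, εpos]
  have hδγ : 16 * δ ≤ γ := by
    rw [hδ]; linarith only [hεk1, mul_nonneg εpos.le hk0, γpos]
  have hδε : 4 * δ = ε := by rw [hδ]; ring
  -- ranks
  obtain ⟨rank, hrank⟩ : ∃ f : G.ConnectedComponent → ℝ, ∀ C,
      f C = ((Finset.univ.filter (fun B => blt B C)).card : ℝ) := ⟨_, fun _ => rfl⟩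
  have hrank0 : ∀ C, 0 ≤ rank C := by intro C; rw [hrank]; positivity
  have hrank_le : ∀ C, rank C ≤ k := by
    intro C
    rw [hrank, hk]
    exact_mod_cast Finset.card_le_univ _
  have hrank_lt : ∀ B C, blt B C → rank B + 1 ≤ rank C := by
    intro B C hBC
    rw [hrank, hrank]
    have hsub : (Finset.univ.filter (fun A => blt A B)) ⊆ (Finset.univ.filter (fun A => blt A C)) := by
      intro A hA
      simp only [Finset.mem_filter, Finset.mem_univ, true_and] at hA ⊢
      exact h_trans _ _ _ hA hBC
    have hBin : B ∈ Finset.univ.filter (fun A => blt A C) := by simp [hBC]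
    have hBout : B ∉ Finset.univ.filter (fun A => blt A B) := by
      simp only [Finset.mem_filter, Finset.mem_univ, true_and]
      exact fun h => h_asymm _ _ h h
    have := Finset.card_lt_card ((Finset.ssubset_iff_of_subset hsub).mpr ⟨B, hBin, hBout⟩)
    exact_mod_cast this
  -- the shifting levels
  obtain ⟨s, hs⟩ : ∃ f : G.ConnectedComponent → ℝ, ∀ C,
      f C = (insert (min (M C) (m C) - γ/2 - ε*k)
        (((Finset.univ.filter (fun B => blt B C))).image M)).max'
        ⟨_, Finset.mem_insert_self _ _⟩ + γ/2 + ε * rank C := ⟨_, fun _ => rfl⟩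
  have hsm : ∀ C, s C ≤ m C := by
    intro C
    rw [hs]
    have hmax : (insert (min (M C) (m C) - γ/2 - ε*k)
        (((Finset.univ.filter (fun B => blt B C))).image M)).max'
        ⟨_, Finset.mem_insert_self _ _⟩ ≤ max (min (M C) (m C) - γ/2 - ε*k) (m C - γ) := by
      apply Finset.max'_le
      intro y hy
      rcases Finset.mem_insert.mp hy with h | h
      · rw [h]; exact le_max_left _ _
      · obtain ⟨B, hB, hBe⟩ := Finset.mem_image.mp h
        simp only [Finset.mem_filter, Finset.mem_univ, true_and] at hB
        refine le_trans ?_ (le_max_right _ _)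
        rw [← hBe]
        linarith [γle B C hB]
    have h1' : ε * rank C ≤ ε * k := mul_le_mul_of_nonneg_left (hrank_le C) εpos.le
    rcases max_cases (min (M C) (m C) - γ/2 - ε*k) (m C - γ) with ⟨he, _⟩ | ⟨he, _⟩ <;>
      rw [he] at hmax
    · have : min (M C) (m C) ≤ m C := min_le_right _ _
      linarith
    · linarith [γpos]
  have hsep : ∀ B C, blt B C → max (s B) (M B) + δ < s C - δ := by
    intro B C hBC
    have hBimg : M B ∈ (insert (min (M C) (m C) - γ/2 - ε*k)
        (((Finset.univ.filter (fun B => blt B C))).image M)) :=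
      Finset.mem_insert_of_mem (Finset.mem_image.mpr ⟨B, by simp [hBC], rfl⟩)
    have hsC_ge : M B + γ/2 + ε * rank C ≤ s C := by
      rw [hs]
      have := Finset.le_max' _ _ hBimg
      linarith
    have hMBcase : M B + δ < s C - δ := by
      have h0 : 0 ≤ ε * rank C := mul_nonneg εpos.le (hrank0 C)
      linarith only [hsC_ge, h0, hδγ, γpos, δpos]
    rcases max_cases (s B) (M B) with ⟨hmax, _⟩ | ⟨hmax, _⟩
    swap
    · rw [hmax]; exact hMBcase
    rw [hmax]
    -- analyze the max' in s B
    have hmemB := Finset.max'_mem (insert (min (M B) (m B) - γ/2 - ε*k)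
        (((Finset.univ.filter (fun A => blt A B))).image M))
        ⟨_, Finset.mem_insert_self _ _⟩
    rcases Finset.mem_insert.mp hmemB with hcase | hcase
    · -- s B ≤ min (M B) (m B) ≤ M B
      have hsB : s B ≤ M B := by
        rw [hs, hcase]
        have h1' : ε * rank B ≤ ε * k := mul_le_mul_of_nonneg_left (hrank_le B) εpos.le
        have : min (M B) (m B) ≤ M B := min_le_left _ _
        linarith
      linarith
    · obtain ⟨B', hB', hBe'⟩ := Finset.mem_image.mp hcase
      simp only [Finset.mem_filter, Finset.mem_univ, true_and] at hB'
      have hsB : s B = M B' + γ/2 + ε * rank B := by rw [hs, ← hBe']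
      have hB'C : blt B' C := h_trans _ _ _ hB' hBC
      have hB'img : M B' ∈ (insert (min (M C) (m C) - γ/2 - ε*k)
          (((Finset.univ.filter (fun B => blt B C))).image M)) :=
        Finset.mem_insert_of_mem (Finset.mem_image.mpr ⟨B', by simp [hB'C], rfl⟩)
      have hsC_ge' : M B' + γ/2 + ε * rank C ≤ s C := by
        rw [hs]
        have := Finset.le_max' _ _ hB'img
        linarith
      have hr := hrank_lt B C hBC
      have h' : ε * (rank B + 1) ≤ ε * rank C := mul_le_mul_of_nonneg_left hr εpos.le
      rw [hsB]
      linarith only [h', hsC_ge', hδε, δpos]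
  -- global scale bounds
  haveI : Nonempty G.ConnectedComponent := ⟨G.connectedComponentMk Classical.ofNonempty⟩
  have hVuniv : (Finset.univ : Finset V).Nonempty := Finset.univ_nonempty
  have hCuniv : (Finset.univ : Finset G.ConnectedComponent).Nonempty := Finset.univ_nonempty
  obtain ⟨X, hX⟩ : ∃ x : ℝ, x = Finset.univ.sup' hVuniv (fun v => max |l v| |r v|) := ⟨_, rfl⟩
  obtain ⟨N, hN⟩ : ∃ x : ℝ, x = Finset.univ.sup' hCuniv (fun C => max |s C| |M C|) := ⟨_, rfl⟩
  have hXl : ∀ v, |l v| ≤ X := fun v => by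
    rw [hX]; exact le_trans (le_max_left _ _) (Finset.le_sup' (fun v => max |l v| |r v|) (Finset.mem_univ v))
  have hXr : ∀ v, |r v| ≤ X := fun v => by
    rw [hX]; exact le_trans (le_max_right _ _) (Finset.le_sup' (fun v => max |l v| |r v|) (Finset.mem_univ v))
  have hNs : ∀ C, |s C| ≤ N := fun C => by
    rw [hN]; exact le_trans (le_max_left _ _) (Finset.le_sup' (fun C => max |s C| |M C|) (Finset.mem_univ C))
  have hNM : ∀ C, |M C| ≤ N := fun C => by
    rw [hN]; exact le_trans (le_max_right _ _) (Finset.le_sup' (fun C => max |s C| |M C|) (Finset.mem_univ C))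
  have hX0 : 0 ≤ X := le_trans (abs_nonneg _) (hXl Classical.ofNonempty)
  have hN0 : 0 ≤ N := le_trans (abs_nonneg _) (hNs Classical.ofNonempty)
  obtain ⟨D, hD⟩ : ∃ d : ℝ, d = X + N + 1 := ⟨_, rfl⟩
  have hDpos : 0 < D := by rw [hD]; linarith
  have hden : 0 < D + δ := by linarith
  obtain ⟨lam, hlam⟩ : ∃ x : ℝ, x = 1 - δ / (D + δ) := ⟨_, rfl⟩
  have h1lam : 1 - lam = δ / (D + δ) := by rw [hlam]; ring
  have hlam0 : 0 ≤ lam := by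
    rw [hlam]
    have : δ / (D + δ) ≤ 1 := by rw [div_le_one hden]; linarith
    linarith
  have h1lam0 : 0 < 1 - lam := by rw [h1lam]; positivity
  have h1lamD : (1 - lam) * D ≤ δ := by
    rw [h1lam, div_mul_eq_mul_div, div_le_iff₀ hden]
    nlinarith
  obtain ⟨H, hH⟩ : ∃ f : G.ConnectedComponent → ℝ → ℝ, ∀ C x,
      f C x = (1 - lam) * x + lam * (max (s C) (min x (M C))) := ⟨_, fun _ _ => rfl⟩
  have Hmono : ∀ C ⦃x y : ℝ⦄, x ≤ y → H C x ≤ H C y := by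
    intro C x y hxy
    rw [hH, hH]
    have hc : max (s C) (min x (M C)) ≤ max (s C) (min y (M C)) :=
      max_le_max le_rfl (min_le_min hxy le_rfl)
    exact add_le_add (mul_le_mul_of_nonneg_left hxy h1lam0.le)
      (mul_le_mul_of_nonneg_left hc hlam0)
  have Hstrict : ∀ C ⦃x y : ℝ⦄, x < y → H C x < H C y := by
    intro C x y hxy
    rw [hH, hH]
    have hc : max (s C) (min x (M C)) ≤ max (s C) (min y (M C)) :=
      max_le_max le_rfl (min_le_min hxy.le le_rfl)
    exact add_lt_add_of_lt_of_le (mul_lt_mul_of_pos_left hxy h1lam0)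
      (mul_le_mul_of_nonneg_left hc hlam0)
  have Hrefl : ∀ C ⦃x y : ℝ⦄, H C x ≤ H C y → x ≤ y := by
    intro C x y hxy
    by_contra hc
    exact absurd hxy (not_le.mpr (Hstrict C (not_le.mp hc)))
  have Hhigh : ∀ C (x : ℝ), |x| ≤ X → H C x ≤ max (s C) (M C) + δ := by
    intro C x hx
    rw [hH]
    have hcT : max (s C) (min x (M C)) ≤ max (s C) (M C) := max_le_max le_rfl (min_le_right _ _)
    have hTge : -N ≤ max (s C) (M C) :=
      le_trans (neg_le_neg (hNs C)) (le_trans (neg_abs_le _) (le_max_left _ _))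
    have e1 : (1 - lam) * x ≤ (1 - lam) * X :=
      mul_le_mul_of_nonneg_left (le_of_abs_le hx) h1lam0.le
    have e2 : lam * (max (s C) (min x (M C))) ≤ lam * max (s C) (M C) :=
      mul_le_mul_of_nonneg_left hcT hlam0
    have e3 : (1 - lam) * (X - max (s C) (M C)) ≤ (1 - lam) * D := by
      apply mul_le_mul_of_nonneg_left _ h1lam0.le
      rw [hD]; linarith
    have e4 : (1 - lam) * X + lam * max (s C) (M C) =
        max (s C) (M C) + (1 - lam) * (X - max (s C) (M C)) := by ring
    linarith only [e1, e2, e3, e4, h1lamD]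
  have Hlow : ∀ C (x : ℝ), |x| ≤ X → s C - δ ≤ H C x := by
    intro C x hx
    rw [hH]
    have hcs : s C ≤ max (s C) (min x (M C)) := le_max_left _ _
    have hsN : s C ≤ N := le_trans (le_abs_self _) (hNs C)
    have e1 : (1 - lam) * (-X) ≤ (1 - lam) * x :=
      mul_le_mul_of_nonneg_left (neg_le_of_abs_le hx) h1lam0.le
    have e2 : lam * (s C) ≤ lam * (max (s C) (min x (M C))) :=
      mul_le_mul_of_nonneg_left hcs hlam0
    have e3 : (1 - lam) * (X + s C) ≤ (1 - lam) * D := by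
      apply mul_le_mul_of_nonneg_left _ h1lam0.le
      rw [hD]; linarith
    have e4 : (1 - lam) * (-X) + lam * (s C) = s C - (1 - lam) * (X + s C) := by ring
    linarith only [e1, e2, e3, e4, h1lamD]
  have cross : ∀ a b : V, blt (G.connectedComponentMk a) (G.connectedComponentMk b) →
      H (G.connectedComponentMk a) (r a) < H (G.connectedComponentMk b) (l b) := by
    intro a b hab
    calc H (G.connectedComponentMk a) (r a) ≤ max (s _) (M _) + δ := Hhigh _ _ (hXr a)
      _ < s (G.connectedComponentMk b) - δ := hsep _ _ hab
      _ ≤ H (G.connectedComponentMk b) (l b) := Hlow _ _ (hXl b)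
  have Hconv : ∀ C x A B, A ≤ x → x ≤ B → A ≤ max (s C) (min x (M C)) →
      max (s C) (min x (M C)) ≤ B → A ≤ H C x ∧ H C x ≤ B := by
    intro C x A B hAx hxB hAc hcB
    rw [hH]
    constructor
    · calc A = (1 - lam) * A + lam * A := by ring
        _ ≤ (1 - lam) * x + lam * (max (s C) (min x (M C))) :=
          add_le_add (mul_le_mul_of_nonneg_left hAx h1lam0.le)
            (mul_le_mul_of_nonneg_left hAc hlam0)
    · calc (1 - lam) * x + lam * (max (s C) (min x (M C))) ≤ (1 - lam) * B + lam * B :=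
          add_le_add (mul_le_mul_of_nonneg_left hxB h1lam0.le)
            (mul_le_mul_of_nonneg_left hcB hlam0)
        _ = B := by ring
  -- the new representation
  refine ⟨fun v => H (G.connectedComponentMk v) (l v),
          fun v => H (G.connectedComponentMk v) (r v), ?_, ?_, ?_, ?_, ?_, ?_⟩
  · exact fun v => Hmono _ (h1 v)
  · intro u v huv
    beta_reduce
    rw [Icc_inter_Icc, nonempty_Icc]
    constructor
    · intro hadj
      have hcc : G.connectedComponentMk u = G.connectedComponentMk v :=
        SimpleGraph.ConnectedComponent.connectedComponentMk_eq_of_adj hadj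
      have hold := (h2 u v huv).mp hadj
      rw [Icc_inter_Icc, nonempty_Icc] at hold
      have luu : l u ≤ r u := le_trans le_sup_left (hold.trans inf_le_left)
      have luv : l u ≤ r v := le_trans le_sup_left (hold.trans inf_le_right)
      have lvu : l v ≤ r u := le_trans le_sup_right (hold.trans inf_le_left)
      have lvv : l v ≤ r v := le_trans le_sup_right (hold.trans inf_le_right)
      rw [hcc]
      exact sup_le (le_inf (Hmono _ luu) (Hmono _ luv))
        (le_inf (Hmono _ lvu) (Hmono _ lvv))
    · intro hne
      have huu : H (G.connectedComponentMk u) (l u) ≤ H (G.connectedComponentMk u) (r u) :=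
        le_trans le_sup_left (hne.trans inf_le_left)
      have huv' : H (G.connectedComponentMk u) (l u) ≤ H (G.connectedComponentMk v) (r v) :=
        le_trans le_sup_left (hne.trans inf_le_right)
      have hvu : H (G.connectedComponentMk v) (l v) ≤ H (G.connectedComponentMk u) (r u) :=
        le_trans le_sup_right (hne.trans inf_le_left)
      have hvv : H (G.connectedComponentMk v) (l v) ≤ H (G.connectedComponentMk v) (r v) :=
        le_trans le_sup_right (hne.trans inf_le_right)
      by_cases hcc : G.connectedComponentMk u = G.connectedComponentMk v
      · rw [hcc] at huu huv' hvu
        apply (h2 u v huv).mpr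
        rw [Icc_inter_Icc, nonempty_Icc]
        exact sup_le (le_inf (Hrefl _ huu) (Hrefl _ huv'))
          (le_inf (Hrefl _ hvu) (Hrefl _ hvv))
      · exfalso
        rcases h_total _ _ hcc with hbl | hbl
        · exact absurd (cross u v hbl) (not_lt.mpr hvu)
        · exact absurd (cross v u hbl) (not_lt.mpr huv')
  · intro u v
    beta_reduce
    rcases eq_or_ne u v with rfl | huv
    · exact ssubset_irrefl _
    by_cases hcc : G.connectedComponentMk u = G.connectedComponentMk v
    · intro hss
      rcases ssubset_iff_subset_not_subset.mp hss with ⟨hsub, hnsub⟩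
      rw [Icc_subset_Icc_iff (Hmono _ (h1 u))] at hsub
      rw [hcc] at hsub
      have hlv : l v ≤ l u := Hrefl _ hsub.1
      have hrv : r u ≤ r v := Hrefl _ hsub.2
      apply h3 u v
      rw [ssubset_iff_subset_not_subset]
      refine ⟨Icc_subset_Icc hlv hrv, fun hrev => hnsub ?_⟩
      rw [Icc_subset_Icc_iff (h1 v)] at hrev
      rw [hcc]
      exact Icc_subset_Icc (Hmono _ hrev.1) (Hmono _ hrev.2)
    · intro hss
      have hmem := hss.subset (left_mem_Icc.mpr (Hmono _ (h1 u)))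
      rw [mem_Icc] at hmem
      rcases h_total _ _ hcc with hbl | hbl
      · have := cross u v hbl
        have hru : H (G.connectedComponentMk u) (l u) ≤ H (G.connectedComponentMk u) (r u) :=
          Hmono _ (h1 u)
        linarith [hmem.1]
      · have := cross v u hbl
        linarith [hmem.2]
  · intro v
    rw [mem_Icc]
    have h4v := h4 v; rw [mem_Icc] at h4v
    refine Hconv (G.connectedComponentMk v) (l v) (Ll v) (Lr v) h4v.1 h4v.2 ?_ ?_
    · exact le_trans (le_min h4v.1 (le_trans (hLR₁ v) (hMv v))) (le_max_right _ _)
    · exact max_le (le_trans (hsm _) (hmv v)) (le_trans (min_le_left _ _) h4v.2)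
  · intro v
    rw [mem_Icc]
    have h5v := h5 v; rw [mem_Icc] at h5v
    refine Hconv (G.connectedComponentMk v) (r v) (Rl v) (Rr v) h5v.1 h5v.2 ?_ ?_
    · exact le_trans (le_min h5v.1 (hMv v)) (le_max_right _ _)
    · exact max_le (le_trans (hsm _) (le_trans (hmv v) (hLR₂ v)))
        (le_trans (min_le_left _ _) h5v.2)
  · intro C C' hlt u hu w hw
    have hcu : G.connectedComponentMk u = C :=
      (SimpleGraph.ConnectedComponent.mem_supp_iff _ _).mp hu
    have hcw : G.connectedComponentMk w = C' :=
      (SimpleGraph.ConnectedComponent.mem_supp_iff _ _).mp hw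
    exact cross u w (by rw [hcu, hcw]; exact hlt)


/-- Given a linear ordering `◀` of the connected components extending `◀′`,
a bounded proper interval representation respecting `◀` exists iff a bounded proper
interval representation exists at all. -/
theorem bounded_proper_rep_in_component_ordering
    {V : Type*} [Fintype V] (G : SimpleGraph V)
    (Ll Lr Rl Rr : V → ℝ)
    (hL : ∀ v, Ll v ≤ Lr v) (hR : ∀ v, Rl v ≤ Rr v)
    (hLR₁ : ∀ v, Ll v ≤ Rl v) (hLR₂ : ∀ v, Lr v ≤ Rr v)
    (blt : G.ConnectedComponent → G.ConnectedComponent → Prop)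
    -- `blt` is a linear (strict total) ordering of the components:
    (h_total : ∀ C C', C ≠ C' → blt C C' ∨ blt C' C)
    (h_asymm : ∀ C C', blt C C' → ¬ blt C' C)
    (h_trans : ∀ A B C, blt A B → blt B C → blt A C)
    -- `blt` extends `◀′`:
    (h_ext : ∀ C C' : G.ConnectedComponent, C ≠ C' →
        (∃ u ∈ C.supp, ∃ v ∈ C'.supp, Lr u ≤ Rl v) → blt C C') :
    (∃ l r : V → ℝ,
        (∀ v, l v ≤ r v) ∧
        (∀ u v, u ≠ v → (G.Adj u v ↔ (Icc (l u) (r u) ∩ Icc (l v) (r v)).Nonempty)) ∧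
        (∀ u v : V, ¬ Icc (l u) (r u) ⊂ Icc (l v) (r v)) ∧
        (∀ v, l v ∈ Icc (Ll v) (Lr v)) ∧ (∀ v, r v ∈ Icc (Rl v) (Rr v)) ∧
        (∀ C C' : G.ConnectedComponent, blt C C' →
          ∀ u ∈ C.supp, ∀ w ∈ C'.supp, r u < l w))
    ↔
    (∃ l r : V → ℝ,
        (∀ v, l v ≤ r v) ∧
        (∀ u v, u ≠ v → (G.Adj u v ↔ (Icc (l u) (r u) ∩ Icc (l v) (r v)).Nonempty)) ∧
        (∀ u v : V, ¬ Icc (l u) (r u) ⊂ Icc (l v) (r v)) ∧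
        (∀ v, l v ∈ Icc (Ll v) (Lr v)) ∧ (∀ v, r v ∈ Icc (Rl v) (Rr v))) := by
  constructor
  · rintro ⟨l, r, h1, h2, h3, h4, h5, _⟩
    exact ⟨l, r, h1, h2, h3, h4, h5⟩
  · rintro ⟨l, r, h1, h2, h3, h4, h5⟩
    exact bounded_proper_rep_aux_rev G Ll Lr Rl Rr hL hR hLR₁ hLR₂ blt h_total h_asymm h_trans
      h_ext l r h1 h2 h3 h4 h5
end

section
/- Let G be a finite simple graph with a bound assignment and let ℛ be a bounded interval representation of G. If C and C′ are distinct connected components of G with C ◀′ C′, then C is placed entirely to the left of C′ in ℛ. -/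
open Set

/-- Propagate a property along reachability. -/
lemma reach_prop {V : Type*} {G : SimpleGraph V} (P : V → Prop)
    (step : ∀ a b, G.Adj a b → P a → P b) :
    ∀ {u v : V}, G.Reachable u v → P u → P v := by
  intro u v h
  obtain ⟨w⟩ := h
  induction w with
  | nil => exact id
  | cons hadj p ih => exact fun hu => ih (step _ _ hadj hu)

/-- In a bounded interval representation, if `C ◀′ C′` for distinct
connected components, then `C` is placed entirely to the left of `C′`. -/
theorem component_blt'_implies_left
    {V : Type*} [Fintype V] (G : SimpleGraph V)
    (Ll Lr Rl Rr : V → ℝ)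
    (hL : ∀ v, Ll v ≤ Lr v) (hR : ∀ v, Rl v ≤ Rr v)
    (hLR₁ : ∀ v, Ll v ≤ Rl v) (hLR₂ : ∀ v, Lr v ≤ Rr v)
    (l r : V → ℝ)
    (hlr : ∀ v, l v ≤ r v)
    (hadj : ∀ u v, u ≠ v → (G.Adj u v ↔ (Icc (l u) (r u) ∩ Icc (l v) (r v)).Nonempty))
    (hbl : ∀ v, l v ∈ Icc (Ll v) (Lr v)) (hbr : ∀ v, r v ∈ Icc (Rl v) (Rr v))
    (C C' : G.ConnectedComponent) (hne : C ≠ C')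
    (hblt : ∃ u ∈ C.supp, ∃ v ∈ C'.supp, Lr u ≤ Rl v) :
    ∀ u ∈ C.supp, ∀ w ∈ C'.supp, r u < l w := by
  -- intervals of vertices in different components are disjoint
  have disj : ∀ u ∈ C.supp, ∀ w ∈ C'.supp, r u < l w ∨ r w < l u := by
    intro u hu w hw
    rw [SimpleGraph.ConnectedComponent.mem_supp_iff] at hu hw
    have hne' : u ≠ w := by rintro rfl; exact hne (hu ▸ hw)
    have hnadj : ¬ G.Adj u w := by
      intro h
      exact hne (hu ▸ hw ▸ (SimpleGraph.ConnectedComponent.sound h.reachable))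
    by_contra hc
    push_neg at hc
    exact hnadj ((hadj u w hne').2
      ⟨max (l u) (l w), ⟨le_max_left _ _, max_le (hlr u) hc.1⟩,
        ⟨le_max_right _ _, max_le hc.2 (hlr w)⟩⟩)
  obtain ⟨u₀, hu₀, v₀, hv₀, hle⟩ := hblt
  -- adjacency gives overlapping intervals
  have overlap : ∀ a b : V, G.Adj a b →
      ∃ x, x ∈ Icc (l a) (r a) ∧ x ∈ Icc (l b) (r b) := by
    intro a b h
    obtain ⟨x, hx⟩ := (hadj a b h.ne).1 h
    exact ⟨x, hx.1, hx.2⟩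
  have base : r u₀ < l v₀ := by
    have h1 : l u₀ ≤ r v₀ :=
      le_trans (hbl u₀).2 (le_trans hle (hbr v₀).1)
    rcases disj u₀ hu₀ v₀ hv₀ with h | h
    · exact h
    · exact absurd (lt_of_lt_of_le h h1) (lt_irrefl _)
  -- every vertex of C has its interval left of l v₀
  have stepC : ∀ u ∈ C.supp, r u < l v₀ := by
    intro u hu
    rw [SimpleGraph.ConnectedComponent.mem_supp_iff] at hu₀ hu
    have hreach : G.Reachable u₀ u :=
      SimpleGraph.ConnectedComponent.exact (hu₀.trans hu.symm)
    have := reach_prop (G := G)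
      (fun a => a ∈ C.supp ∧ r a < l v₀) ?_ hreach ?_
    · exact this.2
    · rintro a b hab ⟨haC, ha⟩
      have hbC : b ∈ C.supp := by
        rw [SimpleGraph.ConnectedComponent.mem_supp_iff] at haC ⊢
        exact (SimpleGraph.ConnectedComponent.sound hab.reachable).symm.trans haC
      refine ⟨hbC, ?_⟩
      obtain ⟨x, hxa, hxb⟩ := overlap a b hab
      rcases disj b hbC v₀ hv₀ with h | h
      · exact h
      · exfalso
        have : r v₀ < r v₀ :=
          lt_of_lt_of_le h (le_trans hxb.1 (le_trans hxa.2
            (le_trans ha.le (le_trans (hlr v₀) le_rfl))))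
        exact lt_irrefl _ this
    · exact ⟨by rw [SimpleGraph.ConnectedComponent.mem_supp_iff]; exact hu₀, base⟩
  -- now fix u ∈ C and propagate through C'
  intro u hu w hw
  have hru : r u < l v₀ := stepC u hu
  rw [SimpleGraph.ConnectedComponent.mem_supp_iff] at hv₀ hw
  have hreach : G.Reachable v₀ w :=
    SimpleGraph.ConnectedComponent.exact (hv₀.trans hw.symm)
  have := reach_prop (G := G)
    (fun b => b ∈ C'.supp ∧ r u < l b) ?_ hreach ?_
  · exact this.2
  · rintro a b hab ⟨haC, ha⟩
    have hbC : b ∈ C'.supp := by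
      rw [SimpleGraph.ConnectedComponent.mem_supp_iff] at haC ⊢
      exact (SimpleGraph.ConnectedComponent.sound hab.reachable).symm.trans haC
    refine ⟨hbC, ?_⟩
    obtain ⟨x, hxa, hxb⟩ := overlap a b hab
    rcases disj u hu b hbC with h | h
    · exact h
    · exfalso
      have : r b < r b :=
        lt_of_lt_of_le (lt_of_le_of_lt h.le (lt_of_le_of_lt (hlr u) (lt_of_lt_of_le ha hxa.1)))
          hxb.2
      exact lt_irrefl _ this
  · exact ⟨by rw [SimpleGraph.ConnectedComponent.mem_supp_iff]; exact hv₀, hru⟩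
end

section
/- Let G be a finite simple graph with a bound assignment and let C and C′ be incomparable connected components of G. If there exist two bounds of vertices of C (each being ℒ_u or ℛ_u for some u ∈ C) that do not intersect non-trivially, then every two bounds of vertices of C′ intersect non-trivially. -/
open Set

/-- `p` (viewed as the closed interval `[p.1, p.2]`) is a bound (left or right) of some
vertex of the set `S`. -/
def IsBoundOf {V : Type*} (Ll Lr Rl Rr : V → ℝ) (S : Set V) (p : ℝ × ℝ) : Prop :=
  ∃ u ∈ S, p = (Ll u, Lr u) ∨ p = (Rl u, Rr u)

/-- If `C` and `C′` are incomparable components (in `◀′`) and two bounds of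
vertices of `C` do not intersect non-trivially, then every two bounds of vertices of `C′`
intersect non-trivially. -/
theorem other_component_bounds_intersect
    {V : Type*} [Fintype V] (G : SimpleGraph V)
    (Ll Lr Rl Rr : V → ℝ)
    (hL : ∀ v, Ll v ≤ Lr v) (hR : ∀ v, Rl v ≤ Rr v)
    (hLR₁ : ∀ v, Ll v ≤ Rl v) (hLR₂ : ∀ v, Lr v ≤ Rr v)
    (C C' : G.ConnectedComponent)
    (h₁ : ¬ ∃ u ∈ C.supp, ∃ v ∈ C'.supp, Lr u ≤ Rl v)
    (h₂ : ¬ ∃ u ∈ C'.supp, ∃ v ∈ C.supp, Lr u ≤ Rl v)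
    (hnon : ∃ p q : ℝ × ℝ, IsBoundOf Ll Lr Rl Rr C.supp p ∧ IsBoundOf Ll Lr Rl Rr C.supp q ∧
      ¬ (p.1 < q.2 ∧ q.1 < p.2)) :
    ∀ p q : ℝ × ℝ, IsBoundOf Ll Lr Rl Rr C'.supp p → IsBoundOf Ll Lr Rl Rr C'.supp q →
      p.1 < q.2 ∧ q.1 < p.2 := by
  push_neg at h₁ h₂
  -- Extract u, w ∈ C with Lr u ≤ Rl w from the non-intersecting bounds of C.
  obtain ⟨p₀, q₀, ⟨u, hu, hpu⟩, ⟨w, hw, hqw⟩, hni⟩ := hnon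
  have key : ∃ u ∈ C.supp, ∃ w ∈ C.supp, Lr u ≤ Rl w := by
    rw [not_and_or, not_lt, not_lt] at hni
    rcases hni with h | h
    · -- q₀.2 ≤ p₀.1 : so Lr w ≤ q₀.2 ≤ p₀.1 ≤ Rl u
      refine ⟨w, hw, u, hu, ?_⟩
      have h1 : Lr w ≤ q₀.2 := by
        rcases hqw with h' | h' <;> simp [h', hLR₂ w]
      have h2 : p₀.1 ≤ Rl u := by
        rcases hpu with h' | h' <;> simp [h', hLR₁ u]
      linarith
    · -- p₀.2 ≤ q₀.1
      refine ⟨u, hu, w, hw, ?_⟩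
      have h1 : Lr u ≤ p₀.2 := by
        rcases hpu with h' | h' <;> simp [h', hLR₂ u]
      have h2 : q₀.1 ≤ Rl w := by
        rcases hqw with h' | h' <;> simp [h', hLR₁ w]
      linarith
  obtain ⟨u, hu, w, hw, huw⟩ := key
  rintro p q ⟨a, ha, hpa⟩ ⟨b, hb, hqb⟩
  have hab : ∀ x ∈ C'.supp, ∀ y ∈ C'.supp, Rl x < Lr y := by
    intro x hx y hy
    have h1 : Rl x < Lr u := h₁ u hu x hx
    have h2 : Rl w < Lr y := h₂ y hy w hw
    linarith
  constructor
  · have h1 : p.1 ≤ Rl a := by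
      rcases hpa with h' | h' <;> simp [h', hLR₁ a]
    have h2 : Lr b ≤ q.2 := by
      rcases hqb with h' | h' <;> simp [h', hLR₂ b]
    have := hab a ha b hb
    linarith
  · have h1 : q.1 ≤ Rl b := by
      rcases hqb with h' | h' <;> simp [h', hLR₁ b]
    have h2 : Lr a ≤ p.2 := by
      rcases hpa with h' | h' <;> simp [h', hLR₂ a]
    have := hab b hb a ha
    linarith
end

section
/- Let G be a finite simple graph with a bound assignment and let ℛ be a bounded proper interval representation of G. Let C and C′ be incomparable connected components of G such that C is placed entirely to the left of C′ in ℛ, and every connected component other than C and C′ is placed either entirely to the left of C or entirely to the right of C′ (i.e., C′ is placed entirely to the left of it). Then there exists a bounded proper interval representation ℛ′ of G that assigns the same interval as ℛ to every vertex not in C ∪ C′ and in which C′ is placed entirely to the left of C. -/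
open Set

private lemma icc_inter_nonempty {a b c d : ℝ} (hab : a ≤ b) (hcd : c ≤ d) :
    (Icc a b ∩ Icc c d).Nonempty ↔ (c ≤ b ∧ a ≤ d) := by
  rw [Set.Icc_inter_Icc, Set.nonempty_Icc, le_min_iff, max_le_iff, max_le_iff]
  exact ⟨fun h => ⟨h.1.2, h.2.1⟩, fun h => ⟨⟨hab, h.1⟩, h.2, hcd⟩⟩

private lemma not_ssubset_of_lt_right {a b c d : ℝ} (hab : a ≤ b) (h : b < c) :
    ¬ Icc a b ⊂ Icc c d := by
  intro hs
  have ha := hs.subset ⟨le_refl a, hab⟩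
  have : c ≤ a := ha.1
  linarith

private lemma not_ssubset_of_lt_left {a b c d : ℝ} (hcd : c ≤ d) (h : b < c) :
    ¬ Icc c d ⊂ Icc a b := by
  intro hs
  have hc := hs.subset ⟨le_refl c, hcd⟩
  have : c ≤ b := hc.2
  linarith

private lemma icc_ssubset_of_map {f : ℝ → ℝ} (hf : StrictMono f) {a b c d : ℝ}
    (hab : a ≤ b) (hcd : c ≤ d)
    (h : Icc (f a) (f b) ⊂ Icc (f c) (f d)) : Icc a b ⊂ Icc c d := by
  have hfab : f a ≤ f b := hf.monotone hab
  have hsub := (Set.Icc_subset_Icc_iff hfab).mp h.subset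
  have hca : c ≤ a := hf.le_iff_le.mp hsub.1
  have hbd : b ≤ d := hf.le_iff_le.mp hsub.2
  rw [Set.ssubset_iff_subset_ne]
  refine ⟨Set.Icc_subset_Icc hca hbd, fun he => ?_⟩
  have h2 : Icc c d ⊆ Icc a b := he ▸ Set.Subset.rfl
  have h3 := (Set.Icc_subset_Icc_iff hcd).mp h2
  have hac : a = c := le_antisymm h3.1 hca
  have hbd' : b = d := le_antisymm hbd h3.2
  exact h.ne (by rw [hac, hbd'])

private lemma min_lt_min' {a b c d : ℝ} (h1 : a < c) (h2 : b < d) :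
    min a b < min c d :=
  lt_min (lt_of_le_of_lt (min_le_left a b) h1) (lt_of_le_of_lt (min_le_right a b) h2)

/-- swapping lemma: If incomparable components `C` and `C′` are placed next
to each other (everything else is entirely on the left of `C` or entirely on the right of
`C′`) in a bounded proper interval representation, with `C` to the left of `C′`, then
there is another bounded proper interval representation, identical outside `C ∪ C′`,
in which `C′` is placed entirely to the left of `C`. -/
theorem swap_adjacent_incomparable_components
    {V : Type*} [Fintype V] (G : SimpleGraph V)
    (Ll Lr Rl Rr : V → ℝ)
    (hL : ∀ v, Ll v ≤ Lr v) (hR : ∀ v, Rl v ≤ Rr v)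
    (hLR₁ : ∀ v, Ll v ≤ Rl v) (hLR₂ : ∀ v, Lr v ≤ Rr v)
    (l r : V → ℝ)
    (hlr : ∀ v, l v ≤ r v)
    (hadj : ∀ u v, u ≠ v → (G.Adj u v ↔ (Icc (l u) (r u) ∩ Icc (l v) (r v)).Nonempty))
    (hproper : ∀ u v : V, ¬ Icc (l u) (r u) ⊂ Icc (l v) (r v))
    (hbl : ∀ v, l v ∈ Icc (Ll v) (Lr v)) (hbr : ∀ v, r v ∈ Icc (Rl v) (Rr v))
    (C C' : G.ConnectedComponent)
    -- `C` and `C′` are incomparable in `◀′`: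
    (h₁ : ¬ ∃ u ∈ C.supp, ∃ v ∈ C'.supp, Lr u ≤ Rl v)
    (h₂ : ¬ ∃ u ∈ C'.supp, ∃ v ∈ C.supp, Lr u ≤ Rl v)
    -- `C` is placed entirely to the left of `C′`:
    (hCC' : ∀ u ∈ C.supp, ∀ w ∈ C'.supp, r u < l w)
    -- every other component is entirely to the left of `C` or entirely to the right of `C′`:
    (hside : ∀ D : G.ConnectedComponent, D ≠ C → D ≠ C' →
      (∀ u ∈ D.supp, ∀ w ∈ C.supp, r u < l w) ∨
      (∀ u ∈ C'.supp, ∀ w ∈ D.supp, r u < l w)) :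
    ∃ l' r' : V → ℝ,
      (∀ v, l' v ≤ r' v) ∧
      (∀ u v, u ≠ v → (G.Adj u v ↔ (Icc (l' u) (r' u) ∩ Icc (l' v) (r' v)).Nonempty)) ∧
      (∀ u v : V, ¬ Icc (l' u) (r' u) ⊂ Icc (l' v) (r' v)) ∧
      (∀ v, l' v ∈ Icc (Ll v) (Lr v)) ∧ (∀ v, r' v ∈ Icc (Rl v) (Rr v)) ∧
      (∀ w : V, w ∉ C.supp → w ∉ C'.supp → l' w = l w ∧ r' w = r w) ∧
      (∀ u ∈ C'.supp, ∀ w ∈ C.supp, r' u < l' w) := by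
  classical
  push_neg at h₁ h₂
  -- representatives
  obtain ⟨u₀, hu₀⟩ := Quot.exists_rep C
  obtain ⟨v₀, hv₀⟩ := Quot.exists_rep C'
  have hu₀' : u₀ ∈ C.supp := by
    rw [SimpleGraph.ConnectedComponent.mem_supp_iff]; exact hu₀
  have hv₀' : v₀ ∈ C'.supp := by
    rw [SimpleGraph.ConnectedComponent.mem_supp_iff]; exact hv₀
  -- C ≠ C'
  have hCne : C ≠ C' := by
    intro h
    have := hCC' u₀ hu₀' u₀ (h ▸ hu₀')
    linarith [hlr u₀]
  -- disjointness of supports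
  have hdisj : ∀ {w : V}, w ∈ C.supp → w ∉ C'.supp := by
    intro w hw hw'
    rw [SimpleGraph.ConnectedComponent.mem_supp_iff] at hw hw'
    exact hCne (hw ▸ hw' ▸ rfl)
  -- finsets
  set FC : Finset V := Finset.univ.filter (fun v => v ∈ C.supp) with hFCdef
  set FC' : Finset V := Finset.univ.filter (fun v => v ∈ C'.supp) with hFC'def
  have hmemC : ∀ {w : V}, w ∈ C.supp → w ∈ FC := fun h =>
    Finset.mem_filter.mpr ⟨Finset.mem_univ _, h⟩
  have hmemC' : ∀ {w : V}, w ∈ C'.supp → w ∈ FC' := fun h =>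
    Finset.mem_filter.mpr ⟨Finset.mem_univ _, h⟩
  have hsuppC : ∀ {w : V}, w ∈ FC → w ∈ C.supp := fun h => (Finset.mem_filter.mp h).2
  have hsuppC' : ∀ {w : V}, w ∈ FC' → w ∈ C'.supp := fun h => (Finset.mem_filter.mp h).2
  have hneC : FC.Nonempty := ⟨u₀, hmemC hu₀'⟩
  have hneC' : FC'.Nonempty := ⟨v₀, hmemC' hv₀'⟩
  -- basic constants
  set m : ℝ := FC.inf' hneC l with hm
  set M : ℝ := FC.sup' hneC r with hM
  set m' : ℝ := FC'.inf' hneC' l with hm'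
  set M' : ℝ := FC'.sup' hneC' r with hM'
  set s : ℝ := FC'.sup' hneC' Rl with hs
  set t : ℝ := FC.inf' hneC Lr with ht
  have hmle : ∀ {w : V}, w ∈ C.supp → m ≤ l w := fun h => Finset.inf'_le _ (hmemC h)
  have hMle : ∀ {w : V}, w ∈ C.supp → r w ≤ M := fun h => Finset.le_sup' _ (hmemC h)
  have hm'le : ∀ {w : V}, w ∈ C'.supp → m' ≤ l w := fun h => Finset.inf'_le _ (hmemC' h)
  have hM'le : ∀ {w : V}, w ∈ C'.supp → r w ≤ M' := fun h => Finset.le_sup' _ (hmemC' h)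
  have hsle : ∀ {w : V}, w ∈ C'.supp → Rl w ≤ s := fun h => Finset.le_sup' _ (hmemC' h)
  have htle : ∀ {w : V}, w ∈ C.supp → t ≤ Lr w := fun h => Finset.inf'_le _ (hmemC h)
  have hmM : m ≤ M := le_trans (hmle hu₀') (le_trans (hlr u₀) (hMle hu₀'))
  have hm'M' : m' ≤ M' := le_trans (hm'le hv₀') (le_trans (hlr v₀) (hM'le hv₀'))
  have hMm' : M < m' := by
    obtain ⟨uM, huM, hMeq⟩ := Finset.exists_mem_eq_sup' hneC r
    obtain ⟨vm, hvm, hmeq⟩ := Finset.exists_mem_eq_inf' hneC' l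
    rw [hM, hm', hMeq, hmeq]
    exact hCC' uM (hsuppC huM) vm (hsuppC' hvm)
  have hst : s < t := by
    obtain ⟨vs, hvs, hseq⟩ := Finset.exists_mem_eq_sup' hneC' Rl
    obtain ⟨ut, hut, hteq⟩ := Finset.exists_mem_eq_inf' hneC Lr
    rw [hs, ht, hseq, hteq]
    exact h₁ ut (hsuppC hut) vs (hsuppC' hvs)
  have hmt : m ≤ t := by
    obtain ⟨ut, hut, hteq⟩ := Finset.exists_mem_eq_inf' hneC Lr
    rw [ht, hteq]
    exact le_trans (hmle (hsuppC hut)) (hbl ut).2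
  have hsM' : s ≤ M' := by
    obtain ⟨vs, hvs, hseq⟩ := Finset.exists_mem_eq_sup' hneC' Rl
    rw [hs, hseq]
    exact le_trans (hbr vs).1 (hM'le (hsuppC' hvs))
  -- outside vertices
  set Wl : Finset V := Finset.univ.filter (fun w => w ∉ C.supp ∧ w ∉ C'.supp ∧ r w < m)
    with hWldef
  set Wr : Finset V := Finset.univ.filter (fun w => w ∉ C.supp ∧ w ∉ C'.supp ∧ ¬ r w < m)
    with hWrdef
  set α : ℝ := (insert (m - 1) (Wl.image r)).max' (Finset.insert_nonempty _ _) with hα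
  set β : ℝ := (insert (M' + 1) (Wr.image l)).min' (Finset.insert_nonempty _ _) with hβ
  have hWrkey : ∀ w ∈ Wr, M' < l w := by
    intro w hw
    obtain ⟨-, hw1, hw2, hw3⟩ := Finset.mem_filter.mp hw
    have hD1 : G.connectedComponentMk w ≠ C := by
      intro h; exact hw1 (SimpleGraph.ConnectedComponent.mem_supp_iff _ _ |>.mpr h)
    have hD2 : G.connectedComponentMk w ≠ C' := by
      intro h; exact hw2 (SimpleGraph.ConnectedComponent.mem_supp_iff _ _ |>.mpr h)
    have hwD : w ∈ (G.connectedComponentMk w).supp :=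
      (SimpleGraph.ConnectedComponent.mem_supp_iff _ _).mpr rfl
    rcases hside _ hD1 hD2 with hleft | hright
    · exfalso
      apply hw3
      obtain ⟨um, hum, hmeq⟩ := Finset.exists_mem_eq_inf' hneC l
      rw [hm, hmeq]
      exact hleft w hwD um (hsuppC hum)
    · obtain ⟨vM, hvM, hMeq⟩ := Finset.exists_mem_eq_sup' hneC' r
      rw [hM', hMeq]
      exact hright vM (hsuppC' hvM) w hwD
  have hαlt : α < m := by
    rw [hα]
    rw [Finset.max'_lt_iff]
    intro y hy
    rcases Finset.mem_insert.mp hy with h | h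
    · rw [h]; linarith
    · obtain ⟨w, hw, hweq⟩ := Finset.mem_image.mp h
      rw [← hweq]
      exact (Finset.mem_filter.mp hw).2.2.2
  have hβgt : M' < β := by
    rw [hβ, Finset.lt_min'_iff]
    intro y hy
    rcases Finset.mem_insert.mp hy with h | h
    · rw [h]; linarith
    · obtain ⟨w, hw, hweq⟩ := Finset.mem_image.mp h
      rw [← hweq]
      exact hWrkey w hw
  have hαmem : ∀ w ∈ Wl, r w ≤ α :=
    fun w hw => Finset.le_max' _ _ (Finset.mem_insert_of_mem (Finset.mem_image_of_mem r hw))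
  have hβmem : ∀ w ∈ Wr, β ≤ l w :=
    fun w hw => Finset.min'_le _ _ (Finset.mem_insert_of_mem (Finset.mem_image_of_mem l hw))
  -- levels and epsilon
  set γ : ℝ := (α + m) / 2 with hγ
  set β' : ℝ := (M' + β) / 2 with hβ'
  have hαγ : α < γ := by rw [hγ]; linarith
  have hγm : γ < m := by rw [hγ]; linarith
  have hM'β' : M' < β' := by rw [hβ']; linarith
  have hβ'β : β' < β := by rw [hβ']; linarith
  set G₀ : ℝ := min t β' - max s γ with hG₀def
  have hG₀ : 0 < G₀ := by
    have h1 : s < min t β' := lt_min hst (lt_of_le_of_lt hsM' hM'β')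
    have h2 : γ < min t β' := lt_min (lt_of_lt_of_le hγm hmt)
      (by linarith)
    rw [hG₀def]
    rcases max_cases s γ with ⟨h, -⟩ | ⟨h, -⟩ <;> rw [h] <;> linarith
  set D : ℝ := (M - m) + (M' - m') with hDdef
  have hD0 : 0 ≤ D := by rw [hDdef]; linarith
  set ε : ℝ := G₀ / (2 * (D + 1)) with hεdef
  have hε : 0 < ε := by
    rw [hεdef]; positivity
  have hεD : ε * D < G₀ := by
    have h2 : ε * (2 * (D + 1)) = G₀ := by
      rw [hεdef]; field_simp
    nlinarith
  -- the maps
  set y : ℝ → ℝ := fun x =>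
    max (FC'.sup' hneC' (fun v => min (max (Ll v) γ + ε * (x - l v)) x))
        (FC'.sup' hneC' (fun v => min (max (Rl v) γ + ε * (x - r v)) x)) with hydef
  set z : ℝ → ℝ := fun x =>
    min (FC.inf' hneC (fun u => max (min (Lr u) β' - ε * (l u - x)) x))
        (FC.inf' hneC (fun u => max (min (Rr u) β' - ε * (r u - x)) x)) with hzdef
  have hymono : StrictMono y := by
    intro x₁ x₂ hx
    rw [hydef]
    dsimp only
    have key : ∀ (c lb : ℝ), min (max lb γ + ε * (x₁ - c)) x₁ < min (max lb γ + ε * (x₂ - c)) x₂ := by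
      intro c lb
      apply min_lt_min' _ hx
      have : ε * (x₁ - c) < ε * (x₂ - c) := by
        apply mul_lt_mul_of_pos_left _ hε
        linarith
      linarith
    apply max_lt_max
    · rw [Finset.sup'_lt_iff]
      intro v hv
      exact lt_of_lt_of_le (key (l v) (Ll v))
        (Finset.le_sup' (fun w => min (max (Ll w) γ + ε * (x₂ - l w)) x₂) hv)
    · rw [Finset.sup'_lt_iff]
      intro v hv
      exact lt_of_lt_of_le (key (r v) (Rl v))
        (Finset.le_sup' (fun w => min (max (Rl w) γ + ε * (x₂ - r w)) x₂) hv)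
  have hzmono : StrictMono z := by
    intro x₁ x₂ hx
    rw [hzdef]
    dsimp only
    have key : ∀ (c ub : ℝ), max (min ub β' - ε * (c - x₁)) x₁ < max (min ub β' - ε * (c - x₂)) x₂ := by
      intro c ub
      apply max_lt_max _ hx
      have : ε * (c - x₂) < ε * (c - x₁) := by
        apply mul_lt_mul_of_pos_left _ hε
        linarith
      linarith
    apply min_lt_min'
    · rw [Finset.lt_inf'_iff]
      intro u hu
      exact lt_of_le_of_lt (Finset.inf'_le _ hu) (key (l u) (Lr u))
    · rw [Finset.lt_inf'_iff]
      intro u hu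
      exact lt_of_le_of_lt (Finset.inf'_le _ hu) (key (r u) (Rr u))
  have hyle : ∀ x, y x ≤ x := by
    intro x
    rw [hydef]
    dsimp only
    apply max_le <;> (apply Finset.sup'_le; intro v hv; exact min_le_right _ _)
  have hzge : ∀ x, x ≤ z x := by
    intro x
    rw [hzdef]
    dsimp only
    apply le_min <;> (apply Finset.le_inf'; intro u hu; exact le_max_right _ _)
  -- lower bounds for y at endpoints of C'
  have hy_l_lb : ∀ {v : V}, v ∈ C'.supp → max (Ll v) γ ≤ y (l v) := by
    intro v hv
    have h1 : max (Ll v) γ ≤ l v := by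
      apply max_le (hbl v).1
      have := hm'le hv
      linarith
    have h2 : min (max (Ll v) γ + ε * (l v - l v)) (l v) = max (Ll v) γ := by
      rw [show ε * (l v - l v) = 0 by ring, add_zero, min_eq_left h1]
    calc max (Ll v) γ = min (max (Ll v) γ + ε * (l v - l v)) (l v) := h2.symm
      _ ≤ FC'.sup' hneC' (fun w => min (max (Ll w) γ + ε * (l v - l w)) (l v)) :=
          Finset.le_sup' (fun w => min (max (Ll w) γ + ε * (l v - l w)) (l v)) (hmemC' hv)
      _ ≤ y (l v) := le_max_left _ _
  have hy_r_lb : ∀ {v : V}, v ∈ C'.supp → max (Rl v) γ ≤ y (r v) := by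
    intro v hv
    have h1 : max (Rl v) γ ≤ r v := by
      apply max_le (hbr v).1
      have := hm'le hv
      have := hlr v
      linarith
    have h2 : min (max (Rl v) γ + ε * (r v - r v)) (r v) = max (Rl v) γ := by
      rw [show ε * (r v - r v) = 0 by ring, add_zero, min_eq_left h1]
    calc max (Rl v) γ = min (max (Rl v) γ + ε * (r v - r v)) (r v) := h2.symm
      _ ≤ FC'.sup' hneC' (fun w => min (max (Rl w) γ + ε * (r v - r w)) (r v)) :=
          Finset.le_sup' (fun w => min (max (Rl w) γ + ε * (r v - r w)) (r v)) (hmemC' hv)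
      _ ≤ y (r v) := le_max_right _ _
  -- upper bound of y in the middle region
  have hy_sep : ∀ x, m' ≤ x → x ≤ M' → y x ≤ max s γ + ε * (M' - m') := by
    intro x hx1 hx2
    rw [hydef]
    dsimp only
    have key : ∀ (v : V), v ∈ FC' → ∀ (c lb : ℝ), lb ≤ s → m' ≤ c →
        min (max lb γ + ε * (x - c)) x ≤ max s γ + ε * (M' - m') := by
      intro v hv c lb hlb hc
      apply le_trans (min_le_left _ _)
      have h1 : max lb γ ≤ max s γ := max_le_max hlb le_rfl
      have h2 : ε * (x - c) ≤ ε * (M' - m') := by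
        apply mul_le_mul_of_nonneg_left _ hε.le
        linarith
      linarith
    apply max_le
    · apply Finset.sup'_le
      intro v hv
      exact key v hv (l v) (Ll v) (le_trans (hLR₁ v) (hsle (hsuppC' hv))) (hm'le (hsuppC' hv))
    · apply Finset.sup'_le
      intro v hv
      exact key v hv (r v) (Rl v) (hsle (hsuppC' hv))
        (le_trans (hm'le (hsuppC' hv)) (hlr v))
  -- upper bounds for z at endpoints of C
  have hz_l_ub : ∀ {u : V}, u ∈ C.supp → z (l u) ≤ Lr u := by
    intro u hu
    have h1 : z (l u) ≤ max (min (Lr u) β' - ε * (l u - l u)) (l u) :=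
      le_trans (min_le_left _ _) (Finset.inf'_le _ (hmemC hu))
    have h2 : max (min (Lr u) β' - ε * (l u - l u)) (l u) ≤ Lr u := by
      rw [show ε * (l u - l u) = 0 by ring, sub_zero]
      exact max_le (min_le_left _ _) (hbl u).2
    linarith
  have hz_r_ub : ∀ {u : V}, u ∈ C.supp → z (r u) ≤ Rr u := by
    intro u hu
    have h1 : z (r u) ≤ max (min (Rr u) β' - ε * (r u - r u)) (r u) :=
      le_trans (min_le_right _ _) (Finset.inf'_le _ (hmemC hu))
    have h2 : max (min (Rr u) β' - ε * (r u - r u)) (r u) ≤ Rr u := by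
      rw [show ε * (r u - r u) = 0 by ring, sub_zero]
      exact max_le (min_le_left _ _) (hbr u).2
    linarith
  have hz_r_ltβ : ∀ {u : V}, u ∈ C.supp → z (r u) < β := by
    intro u hu
    have h1 : z (r u) ≤ max (min (Rr u) β' - ε * (r u - r u)) (r u) :=
      le_trans (min_le_right _ _) (Finset.inf'_le _ (hmemC hu))
    have h2 : max (min (Rr u) β' - ε * (r u - r u)) (r u) < β := by
      rw [show ε * (r u - r u) = 0 by ring, sub_zero]
      apply max_lt (lt_of_le_of_lt (min_le_right _ _) hβ'β)
      have := hMle hu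
      linarith
    linarith
  -- lower bound of z in the middle region
  have hz_sep : ∀ x, m ≤ x → x ≤ M → min t β' - ε * (M - m) ≤ z x := by
    intro x hx1 hx2
    rw [hzdef]
    dsimp only
    have key : ∀ (c ub : ℝ), t ≤ ub → c ≤ M →
        min t β' - ε * (M - m) ≤ max (min ub β' - ε * (c - x)) x := by
      intro c ub hub hc
      apply le_trans _ (le_max_left _ _)
      have h1 : min t β' ≤ min ub β' := min_le_min hub le_rfl
      have h2 : ε * (c - x) ≤ ε * (M - m) := by
        apply mul_le_mul_of_nonneg_left _ hε.le
        linarith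
      linarith
    apply le_min
    · apply Finset.le_inf'
      intro u hu
      exact key (l u) (Lr u) (htle (hsuppC hu)) (le_trans (hlr u) (hMle (hsuppC hu)))
    · apply Finset.le_inf'
      intro u hu
      exact key (r u) (Rr u) (le_trans (htle (hsuppC hu)) (hLR₂ u)) (hMle (hsuppC hu))
  -- the main separation
  have hsep : ∀ {v u : V}, v ∈ C'.supp → u ∈ C.supp → y (r v) < z (l u) := by
    intro v u hv hu
    have h1 : y (r v) ≤ max s γ + ε * (M' - m') :=
      hy_sep (r v) (le_trans (hm'le hv) (hlr v)) (hM'le hv)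
    have h2 : min t β' - ε * (M - m) ≤ z (l u) :=
      hz_sep (l u) (hmle hu) (le_trans (hlr u) (hMle hu))
    have h3 : ε * ((M - m) + (M' - m')) = ε * (M - m) + ε * (M' - m') := by ring
    have h4 : ε * D < G₀ := hεD
    rw [hDdef] at h4
    rw [hG₀def] at h4
    linarith [h3, h4]
  have hnadj : ∀ (K : G.ConnectedComponent) {a b : V}, a ∈ K.supp → b ∉ K.supp →
      ¬ G.Adj a b := by
    intro K a b ha hb hA
    apply hb
    rw [SimpleGraph.ConnectedComponent.mem_supp_iff] at ha ⊢
    rw [← ha]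
    exact (SimpleGraph.ConnectedComponent.sound hA.reachable).symm
  have hout : ∀ w, w ∉ C.supp → w ∉ C'.supp → (r w ≤ α) ∨ (β ≤ l w) := by
    intro w hw hw'
    by_cases h : r w < m
    · exact Or.inl (hαmem w (Finset.mem_filter.mpr ⟨Finset.mem_univ _, hw, hw', h⟩))
    · exact Or.inr (hβmem w (Finset.mem_filter.mpr ⟨Finset.mem_univ _, hw, hw', h⟩))
  have hyγl : ∀ {w : V}, w ∈ C'.supp → γ ≤ y (l w) := fun h =>
    le_trans (le_max_right _ _) (hy_l_lb h)
  -- the new representation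
  refine ⟨fun w => if w ∈ C.supp then z (l w) else if w ∈ C'.supp then y (l w) else l w,
          fun w => if w ∈ C.supp then z (r w) else if w ∈ C'.supp then y (r w) else r w,
          ?_, ?_, ?_, ?_, ?_, ?_, ?_⟩
  case _ =>
    -- l' ≤ r'
    intro w
    by_cases hw : w ∈ C.supp
    · simp only [if_pos hw]
      exact hzmono.monotone (hlr w)
    · by_cases hw' : w ∈ C'.supp
      · simp only [if_neg hw, if_pos hw']
        exact hymono.monotone (hlr w)
      · simp only [if_neg hw, if_neg hw']
        exact hlr w
  case _ =>
    -- adjacency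
    intro u v huv
    by_cases hu : u ∈ C.supp
    · by_cases hv : v ∈ C.supp
      · simp only [if_pos hu, if_pos hv]
        rw [hadj u v huv, icc_inter_nonempty (hlr u) (hlr v),
          icc_inter_nonempty (hzmono.monotone (hlr u)) (hzmono.monotone (hlr v)),
          hzmono.le_iff_le, hzmono.le_iff_le]
      · by_cases hv' : v ∈ C'.supp
        · simp only [if_pos hu, if_neg hv, if_pos hv']
          apply iff_of_false (hnadj C hu hv)
          rintro ⟨x, hx1, hx2⟩
          have h0 := hsep hv' hu
          have h1 := hx1.1
          have h2 := hx2.2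
          linarith
        · simp only [if_pos hu, if_neg hv, if_neg hv']
          apply iff_of_false (hnadj C hu hv)
          rcases hout v hv hv' with hc | hc
          · rintro ⟨x, hx1, hx2⟩
            have h1 := hzge (l u)
            have h2 := hmle hu
            have h3 := hx1.1
            have h4 := hx2.2
            linarith
          · rintro ⟨x, hx1, hx2⟩
            have h1 := hz_r_ltβ hu
            have h3 := hx1.2
            have h4 := hx2.1
            linarith
    · by_cases hu' : u ∈ C'.supp
      · by_cases hv : v ∈ C.supp
        · simp only [if_neg hu, if_pos hu', if_pos hv]
          apply iff_of_false (fun hA => hnadj C hv hu hA.symm)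
          rintro ⟨x, hx1, hx2⟩
          have h0 := hsep hu' hv
          have h1 := hx1.2
          have h2 := hx2.1
          linarith
        · by_cases hv' : v ∈ C'.supp
          · simp only [if_neg hu, if_pos hu', if_neg hv, if_pos hv']
            rw [hadj u v huv, icc_inter_nonempty (hlr u) (hlr v),
              icc_inter_nonempty (hymono.monotone (hlr u)) (hymono.monotone (hlr v)),
              hymono.le_iff_le, hymono.le_iff_le]
          · simp only [if_neg hu, if_pos hu', if_neg hv, if_neg hv']
            apply iff_of_false (hnadj C' hu' hv')
            rcases hout v hv hv' with hc | hc
            · rintro ⟨x, hx1, hx2⟩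
              have h1 := hyγl hu'
              have h3 := hx1.1
              have h4 := hx2.2
              linarith
            · rintro ⟨x, hx1, hx2⟩
              have h1 := hyle (r u)
              have h2 := hM'le hu'
              have h3 := hx1.2
              have h4 := hx2.1
              linarith
      · by_cases hv : v ∈ C.supp
        · simp only [if_neg hu, if_neg hu', if_pos hv]
          apply iff_of_false (fun hA => hnadj C hv hu hA.symm)
          rcases hout u hu hu' with hc | hc
          · rintro ⟨x, hx1, hx2⟩
            have h1 := hzge (l v)
            have h2 := hmle hv
            have h3 := hx1.2
            have h4 := hx2.1
            linarith
          · rintro ⟨x, hx1, hx2⟩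
            have h1 := hz_r_ltβ hv
            have h3 := hx1.1
            have h4 := hx2.2
            linarith
        · by_cases hv' : v ∈ C'.supp
          · simp only [if_neg hu, if_neg hu', if_neg hv, if_pos hv']
            apply iff_of_false (fun hA => hnadj C' hv' hu' hA.symm)
            rcases hout u hu hu' with hc | hc
            · rintro ⟨x, hx1, hx2⟩
              have h1 := hyγl hv'
              have h3 := hx1.2
              have h4 := hx2.1
              linarith
            · rintro ⟨x, hx1, hx2⟩
              have h1 := hyle (r v)
              have h2 := hM'le hv'
              have h3 := hx1.1
              have h4 := hx2.2
              linarith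
          · simp only [if_neg hu, if_neg hu', if_neg hv, if_neg hv']
            exact hadj u v huv
  case _ =>
    -- properness
    intro u v
    by_cases hu : u ∈ C.supp
    · by_cases hv : v ∈ C.supp
      · simp only [if_pos hu, if_pos hv]
        intro h
        exact hproper u v (icc_ssubset_of_map hzmono (hlr u) (hlr v) h)
      · by_cases hv' : v ∈ C'.supp
        · simp only [if_pos hu, if_neg hv, if_pos hv']
          exact not_ssubset_of_lt_left (hzmono.monotone (hlr u)) (hsep hv' hu)
        · simp only [if_pos hu, if_neg hv, if_neg hv']
          rcases hout v hv hv' with hc | hc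
          · have h0 : r v < z (l u) := by
              have h1 := hzge (l u)
              have h2 := hmle hu
              linarith
            exact not_ssubset_of_lt_left (hzmono.monotone (hlr u)) h0
          · have h0 : z (r u) < l v := by
              have h1 := hz_r_ltβ hu
              linarith
            exact not_ssubset_of_lt_right (hzmono.monotone (hlr u)) h0
    · by_cases hu' : u ∈ C'.supp
      · by_cases hv : v ∈ C.supp
        · simp only [if_neg hu, if_pos hu', if_pos hv]
          exact not_ssubset_of_lt_right (hymono.monotone (hlr u)) (hsep hu' hv)
        · by_cases hv' : v ∈ C'.supp
          · simp only [if_neg hu, if_pos hu', if_neg hv, if_pos hv']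
            intro h
            exact hproper u v (icc_ssubset_of_map hymono (hlr u) (hlr v) h)
          · simp only [if_neg hu, if_pos hu', if_neg hv, if_neg hv']
            rcases hout v hv hv' with hc | hc
            · have h0 : r v < y (l u) := by
                have h1 := hyγl hu'
                linarith
              exact not_ssubset_of_lt_left (hymono.monotone (hlr u)) h0
            · have h0 : y (r u) < l v := by
                have h1 := hyle (r u)
                have h2 := hM'le hu'
                linarith
              exact not_ssubset_of_lt_right (hymono.monotone (hlr u)) h0
      · by_cases hv : v ∈ C.supp
        · simp only [if_neg hu, if_neg hu', if_pos hv]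
          rcases hout u hu hu' with hc | hc
          · have h0 : r u < z (l v) := by
              have h1 := hzge (l v)
              have h2 := hmle hv
              linarith
            exact not_ssubset_of_lt_right (hlr u) h0
          · have h0 : z (r v) < l u := by
              have h1 := hz_r_ltβ hv
              linarith
            exact not_ssubset_of_lt_left (hlr u) h0
        · by_cases hv' : v ∈ C'.supp
          · simp only [if_neg hu, if_neg hu', if_neg hv, if_pos hv']
            rcases hout u hu hu' with hc | hc
            · have h0 : r u < y (l v) := by
                have h1 := hyγl hv'
                linarith
              exact not_ssubset_of_lt_right (hlr u) h0
            · have h0 : y (r v) < l u := by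
                have h1 := hyle (r v)
                have h2 := hM'le hv'
                linarith
              exact not_ssubset_of_lt_left (hlr u) h0
          · simp only [if_neg hu, if_neg hu', if_neg hv, if_neg hv']
            exact hproper u v
  case _ =>
    -- left bounds
    intro w
    by_cases hw : w ∈ C.supp
    · simp only [if_pos hw]
      exact ⟨le_trans (hbl w).1 (hzge (l w)), hz_l_ub hw⟩
    · by_cases hw' : w ∈ C'.supp
      · simp only [if_neg hw, if_pos hw']
        exact ⟨le_trans (le_max_left _ _) (hy_l_lb hw'), le_trans (hyle (l w)) (hbl w).2⟩
      · simp only [if_neg hw, if_neg hw']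
        exact hbl w
  case _ =>
    -- right bounds
    intro w
    by_cases hw : w ∈ C.supp
    · simp only [if_pos hw]
      exact ⟨le_trans (hbr w).1 (hzge (r w)), hz_r_ub hw⟩
    · by_cases hw' : w ∈ C'.supp
      · simp only [if_neg hw, if_pos hw']
        exact ⟨le_trans (le_max_left _ _) (hy_r_lb hw'), le_trans (hyle (r w)) (hbr w).2⟩
      · simp only [if_neg hw, if_neg hw']
        exact hbr w
  case _ =>
    -- unchanged outside
    intro w hw hw'
    exact ⟨by simp [hw, hw'], by simp [hw, hw']⟩
  case _ =>
    -- C' entirely to the left of C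
    intro u hu w hw
    have hu' : u ∉ C.supp := fun h => hdisj h hu
    simp only [if_pos hw, if_neg hu', if_pos hu]
    exact hsep hu hw
end

section
/- Let ℛ be an interval representation of a finite simple graph G and let Γ be a nonempty group of indistinguishable vertices of G. Let ℛ′ assign to every vertex w ∉ Γ the same interval I_w as ℛ, and to every vertex u ∈ Γ a closed interval I′_u with ⋂Γ ⊆ I′_u ⊆ ⋃Γ. Then ℛ′ is an interval representation of G: distinct vertices u, v are adjacent in G if and only if I′_u ∩ I′_v ≠ ∅. -/
open Set

/-- Replacing the intervals of a nonempty group `Γ` of indistinguishable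
vertices by arbitrary closed intervals squeezed between `⋂Γ` and `⋃Γ` (keeping the other
intervals unchanged) again gives an interval representation of `G`. -/
theorem indistinguishable_group_replacement
    {V : Type*} [Fintype V] (G : SimpleGraph V)
    (l r : V → ℝ)
    (hlr : ∀ v, l v ≤ r v)
    (hadj : ∀ u v, u ≠ v → (G.Adj u v ↔ (Icc (l u) (r u) ∩ Icc (l v) (r v)).Nonempty))
    (Γ : Set V) (hΓne : Γ.Nonempty)
    (hclique : G.IsClique Γ)
    (hgroup : ∀ u ∉ Γ, (∀ v ∈ Γ, G.Adj u v) ∨ (∀ v ∈ Γ, ¬ G.Adj u v))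
    (l' r' : V → ℝ)
    (hlr' : ∀ v, l' v ≤ r' v)
    (hout : ∀ w ∉ Γ, l' w = l w ∧ r' w = r w)
    (hin : ∀ u ∈ Γ,
      (⋂ v ∈ Γ, Icc (l v) (r v)) ⊆ Icc (l' u) (r' u) ∧
      Icc (l' u) (r' u) ⊆ ⋃ v ∈ Γ, Icc (l v) (r v)) :
    ∀ u v, u ≠ v → (G.Adj u v ↔ (Icc (l' u) (r' u) ∩ Icc (l' v) (r' v)).Nonempty) := by
  classical
  -- cross inequality inside the clique
  have key : ∀ v ∈ Γ, ∀ w ∈ Γ, l v ≤ r w := by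
    intro v hv w hw
    rcases eq_or_ne v w with rfl | hvw
    · exact hlr v
    · obtain ⟨x, hx1, hx2⟩ := (hadj v w hvw).1 (hclique hv hw hvw)
      exact hx1.1.trans hx2.2
  have hfin := Γ.toFinite
  have hsne : hfin.toFinset.Nonempty := by
    exact hfin.toFinset_nonempty.mpr hΓne
  set p := hfin.toFinset.sup' hsne l with hp
  have hp_ge : ∀ w ∈ Γ, l w ≤ p := fun w hw => Finset.le_sup' l (by simpa using hw)
  have hp_le : ∀ w ∈ Γ, p ≤ r w := by
    intro w hw
    apply Finset.sup'_le
    intro v hv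
    exact key v (by simpa using hv) w hw
  have hpInter : p ∈ ⋂ v ∈ Γ, Icc (l v) (r v) := by
    simp only [mem_iInter, mem_Icc]
    exact fun v hv => ⟨hp_ge v hv, hp_le v hv⟩
  -- mixed case
  have mixed : ∀ u ∈ Γ, ∀ v, v ∉ Γ → u ≠ v →
      (G.Adj u v ↔ (Icc (l' u) (r' u) ∩ Icc (l' v) (r' v)).Nonempty) := by
    intro u hu v hv huv
    obtain ⟨hlv, hrv⟩ := hout v hv
    constructor
    · intro hadjv
      have hall : ∀ w ∈ Γ, G.Adj v w := by
        rcases hgroup v hv with h | h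
        · exact h
        · exact absurd hadjv.symm (h u hu)
      -- every w ∈ Γ : I_v ∩ I_w nonempty
      have hcross : ∀ w ∈ Γ, l v ≤ r w ∧ l w ≤ r v := by
        intro w hw
        have hvw : v ≠ w := fun h => hv (h ▸ hw)
        obtain ⟨x, hx1, hx2⟩ := (hadj v w hvw).1 (hall w hw)
        exact ⟨hx1.1.trans hx2.2, hx2.1.trans hx1.2⟩
      set x := max p (l v) with hx
      have hxInter : x ∈ ⋂ w ∈ Γ, Icc (l w) (r w) := by
        simp only [mem_iInter, mem_Icc]
        intro w hw
        exact ⟨(hp_ge w hw).trans (le_max_left _ _),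
          max_le (hp_le w hw) (hcross w hw).1⟩
      have hprv : p ≤ r v := by
        apply Finset.sup'_le
        intro w hw
        exact (hcross w (by simpa using hw)).2
      refine ⟨x, (hin u hu).1 hxInter, ?_⟩
      rw [hlv, hrv, mem_Icc]
      exact ⟨le_max_right _ _, max_le hprv (hlr v)⟩
    · rintro ⟨x, hxu, hxv⟩
      by_contra hnadj
      have hnone : ∀ w ∈ Γ, ¬ G.Adj v w := by
        rcases hgroup v hv with h | h
        · exact absurd (h u hu).symm hnadj
        · exact h
      obtain ⟨w, hw, hxw⟩ := by
        have := (hin u hu).2 hxu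
        simpa only [mem_iUnion, exists_prop] using this
      have hvw : v ≠ w := fun h => hv (h ▸ hw)
      exact hnone w hw ((hadj v w hvw).2 ⟨x, by rw [hlv, hrv] at hxv; exact hxv, hxw⟩)
  intro u v huv
  by_cases hu : u ∈ Γ <;> by_cases hvΓ : v ∈ Γ
  · constructor
    · intro _
      exact ⟨p, (hin u hu).1 hpInter, (hin v hvΓ).1 hpInter⟩
    · intro _
      exact hclique hu hvΓ huv
  · exact mixed u hu v hvΓ huv
  · rw [G.adj_comm, Set.inter_comm]
    exact mixed v hvΓ u hu huv.symm
  · obtain ⟨hlu, hru⟩ := hout u hu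
    obtain ⟨hlv, hrv⟩ := hout v hvΓ
    rw [hlu, hru, hlv, hrv]
    exact hadj u v huv
end

section
/- Let G be a finite simple graph with a bound assignment, let ℛ be a bounded interval representation of G, and let C be a maximal clique of G. Then there exists a point p ∈ J_C such that p ∈ I_v for every v ∈ C and p ∉ I_w for every w ∉ C; in particular, J_C is nonempty. -/
open Set

/-- The set `J_C` of candidate clique points for a maximal clique `C`, with respect to
a bound assignment given by the four endpoint functions. -/
def JSet {V : Type*} (Ll Lr Rl Rr : V → ℝ) (C : Set V) : Set ℝ :=
  (⋂ u ∈ C, Icc (Ll u) (Rr u)) \ (⋃ v ∈ Cᶜ, Icc (Lr v) (Rl v))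

/-- In every bounded interval representation, each maximal clique `C` has a
clique point lying in `J_C`; in particular `J_C` is nonempty. -/
theorem maximal_clique_point_in_JSet
    {V : Type*} [Fintype V] (G : SimpleGraph V)
    (Ll Lr Rl Rr : V → ℝ)
    (hL : ∀ v, Ll v ≤ Lr v) (hR : ∀ v, Rl v ≤ Rr v)
    (hLR₁ : ∀ v, Ll v ≤ Rl v) (hLR₂ : ∀ v, Lr v ≤ Rr v)
    (l r : V → ℝ)
    (hlr : ∀ v, l v ≤ r v)
    (hadj : ∀ u v, u ≠ v → (G.Adj u v ↔ (Icc (l u) (r u) ∩ Icc (l v) (r v)).Nonempty))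
    (hbl : ∀ v, l v ∈ Icc (Ll v) (Lr v)) (hbr : ∀ v, r v ∈ Icc (Rl v) (Rr v))
    (C : Set V) (hCne : C.Nonempty) (hclique : G.IsClique C)
    (hmax : ∀ D : Set V, D.Nonempty → G.IsClique D → C ⊆ D → C = D) :
    ∃ p ∈ JSet Ll Lr Rl Rr C,
      (∀ v ∈ C, p ∈ Icc (l v) (r v)) ∧ (∀ w ∉ C, p ∉ Icc (l w) (r w)) := by
  classical
  -- key clique fact: left endpoints are below all right endpoints within C
  have key : ∀ u ∈ C, ∀ v ∈ C, l u ≤ r v := by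
    intro u hu v hv
    by_cases huv : u = v
    · subst huv; exact hlr u
    · have hadjuv : G.Adj u v := hclique hu hv huv
      obtain ⟨x, hx⟩ := (hadj u v huv).mp hadjuv
      exact hx.1.1.trans hx.2.2
  have hfin : C.Finite := Set.toFinite C
  set s : Finset V := hfin.toFinset with hs
  have hsC : ∀ v, v ∈ s ↔ v ∈ C := fun v => hfin.mem_toFinset
  have hsne : s.Nonempty := by
    obtain ⟨v, hv⟩ := hCne
    exact ⟨v, (hsC v).mpr hv⟩
  have himne : (s.image l).Nonempty := hsne.image l
  set p : ℝ := (s.image l).max' himne with hp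
  obtain ⟨u₀, hu₀s, hu₀⟩ := Finset.mem_image.mp ((s.image l).max'_mem himne)
  have hu₀C : u₀ ∈ C := (hsC u₀).mp hu₀s
  -- p lies in every interval of C
  have hmemC : ∀ v ∈ C, p ∈ Icc (l v) (r v) := by
    intro v hv
    constructor
    · exact (s.image l).le_max' _ (Finset.mem_image_of_mem l ((hsC v).mpr hv))
    · calc p = l u₀ := (hp.trans hu₀.symm)
        _ ≤ r v := key u₀ hu₀C v hv
  -- p avoids every interval outside C
  have hnotmem : ∀ w ∉ C, p ∉ Icc (l w) (r w) := by
    intro w hw hpw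
    -- every u ∈ C would then be adjacent to w, contradicting maximality
    have : ∀ u ∈ C, G.Adj u w := by
      intro u hu
      have huw : u ≠ w := fun h => hw (h ▸ hu)
      exact (hadj u w huw).mpr ⟨p, hmemC u hu, hpw⟩
    have hclq : G.IsClique (insert w C) := by
      intro a ha b hb hab
      rcases ha with ha | ha <;> rcases hb with hb | hb
      · exact absurd (ha.trans hb.symm) hab
      · subst ha; exact (this b hb).symm
      · subst hb; exact this a ha
      · exact hclique ha hb hab
    have := hmax (insert w C) ⟨w, mem_insert _ _⟩ hclq (subset_insert _ _)
    exact hw (this ▸ mem_insert w C)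
  refine ⟨p, ?_, hmemC, hnotmem⟩
  constructor
  · simp only [mem_iInter]
    intro u hu
    have h := hmemC u hu
    exact ⟨(hbl u).1.trans h.1, h.2.trans (hbr u).2⟩
  · simp only [mem_iUnion, not_exists]
    intro v hv hpv
    exact hnotmem v hv ⟨(hbl v).2.trans hpv.1, hpv.2.trans (hbr v).1⟩
end

section
/- Let ℛ be an interval representation of a finite simple graph G, and let C and C′ be distinct connected components of G. Then either C is placed entirely to the left of C′ or C′ is placed entirely to the left of C. -/
open Set

/-- If two vertices lie in different connected components, their intervals are disjoint,
hence one is strictly left of the other. -/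
lemma interval_disjoint_of_ne_component
    {V : Type*} (G : SimpleGraph V)
    (l r : V → ℝ) (hlr : ∀ v, l v ≤ r v)
    (hadj : ∀ u v, u ≠ v → (G.Adj u v ↔ (Icc (l u) (r u) ∩ Icc (l v) (r v)).Nonempty))
    {u w : V} (h : G.connectedComponentMk u ≠ G.connectedComponentMk w) :
    r u < l w ∨ r w < l u := by
  have hne : u ≠ w := fun e => h (by rw [e])
  have hnadj : ¬ G.Adj u w := fun ha => h (SimpleGraph.ConnectedComponent.sound ha.reachable)
  by_contra hc
  push_neg at hc
  exact hnadj ((hadj u w hne).mpr ⟨max (l u) (l w),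
    ⟨le_max_left _ _, max_le (hlr u) hc.1⟩, ⟨le_max_right _ _, max_le hc.2 (hlr w)⟩⟩)

/-- Being to the left of a fixed vertex `w` (in another component) propagates along walks. -/
lemma left_of_walk
    {V : Type*} (G : SimpleGraph V)
    (l r : V → ℝ) (hlr : ∀ v, l v ≤ r v)
    (hadj : ∀ u v, u ≠ v → (G.Adj u v ↔ (Icc (l u) (r u) ∩ Icc (l v) (r v)).Nonempty))
    {u v w : V} (p : G.Walk u v)
    (h : G.connectedComponentMk u ≠ G.connectedComponentMk w)
    (hv : r v < l w) : r u < l w := by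
  induction p with
  | nil => exact hv
  | @cons a b c hab p ih =>
    have hbc : G.connectedComponentMk a = G.connectedComponentMk b :=
      SimpleGraph.ConnectedComponent.sound hab.reachable
    have hb : r b < l w := ih (hbc ▸ h) hv
    rcases interval_disjoint_of_ne_component G l r hlr hadj h with h1 | h2
    · exact h1
    · exfalso
      obtain ⟨x, ⟨hx1, hx2⟩, ⟨hx3, hx4⟩⟩ := (hadj a b hab.ne).mp hab
      linarith [hlr w]

/-- Being to the right of a fixed vertex `u` (in another component) propagates along walks. -/
lemma right_of_walk
    {V : Type*} (G : SimpleGraph V)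
    (l r : V → ℝ) (hlr : ∀ v, l v ≤ r v)
    (hadj : ∀ u v, u ≠ v → (G.Adj u v ↔ (Icc (l u) (r u) ∩ Icc (l v) (r v)).Nonempty))
    {u w b : V} (p : G.Walk w b)
    (h : G.connectedComponentMk u ≠ G.connectedComponentMk w)
    (hb : r u < l b) : r u < l w := by
  induction p with
  | nil => exact hb
  | @cons x y z hxy p ih =>
    have hxyc : G.connectedComponentMk x = G.connectedComponentMk y :=
      SimpleGraph.ConnectedComponent.sound hxy.reachable
    have hy : r u < l y := ih (hxyc ▸ h) hb
    rcases interval_disjoint_of_ne_component G l r hlr hadj h with h1 | h2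
    · exact h1
    · exfalso
      obtain ⟨t, ⟨ht1, ht2⟩, ⟨ht3, ht4⟩⟩ := (hadj x y hxy.ne).mp hxy
      linarith [hlr u]

/-- In an interval representation, any two distinct connected components are
completely ordered: one of them is placed entirely to the left of the other. -/
theorem components_are_ordered
    {V : Type*} [Fintype V] (G : SimpleGraph V)
    (l r : V → ℝ)
    (hlr : ∀ v, l v ≤ r v)
    (hadj : ∀ u v, u ≠ v → (G.Adj u v ↔ (Icc (l u) (r u) ∩ Icc (l v) (r v)).Nonempty))
    (C C' : G.ConnectedComponent) (hne : C ≠ C') :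
    (∀ u ∈ C.supp, ∀ w ∈ C'.supp, r u < l w) ∨
    (∀ u ∈ C'.supp, ∀ w ∈ C.supp, r u < l w) := by
  obtain ⟨u0, hu0⟩ := C.exists_rep
  obtain ⟨w0, hw0⟩ := C'.exists_rep
  have hu0' : G.connectedComponentMk u0 = C := hu0
  have hw0' : G.connectedComponentMk w0 = C' := hw0
  have hne0 : G.connectedComponentMk u0 ≠ G.connectedComponentMk w0 := by
    rw [hu0', hw0']; exact hne
  have key : ∀ (a b : V), G.connectedComponentMk a ≠ G.connectedComponentMk b →
      r a < l b →
      ∀ u ∈ (G.connectedComponentMk a).supp, ∀ w ∈ (G.connectedComponentMk b).supp,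
        r u < l w := by
    intro a b hab h0 u hu w hw
    have hu' : G.connectedComponentMk u = G.connectedComponentMk a := hu
    have hw' : G.connectedComponentMk w = G.connectedComponentMk b := hw
    have hub : G.connectedComponentMk u ≠ G.connectedComponentMk b := by
      rw [hu']; exact hab
    have h1 : r u < l b := by
      obtain ⟨p⟩ := SimpleGraph.ConnectedComponent.exact hu'
      exact left_of_walk G l r hlr hadj p hub h0
    have huw : G.connectedComponentMk u ≠ G.connectedComponentMk w := by
      rw [hu', hw']; exact hab
    obtain ⟨p⟩ := SimpleGraph.ConnectedComponent.exact hw'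
    exact right_of_walk G l r hlr hadj p huw h1
  rcases interval_disjoint_of_ne_component G l r hlr hadj hne0 with h1 | h2
  · left
    have := key u0 w0 hne0 h1
    rw [hu0', hw0'] at this
    exact this
  · right
    have := key w0 u0 hne0.symm h2
    rw [hu0', hw0'] at this
    exact this
end

section
/- Let ℛ be an interval representation of a finite simple graph G and let S be a nonempty set of vertices inducing a connected subgraph of G. Then ⋃_{v∈S} I_v is an order-connected subset of ℝ: whenever x, y ∈ ⋃_{v∈S} I_v and x ≤ z ≤ y, then z ∈ ⋃_{v∈S} I_v. -/
open Set

lemma walk_union_aux {V : Type*} (G : SimpleGraph V)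
    (l r : V → ℝ)
    (hadj : ∀ u v, u ≠ v → (G.Adj u v ↔ (Icc (l u) (r u) ∩ Icc (l v) (r v)).Nonempty))
    (S : Set V) :
    ∀ (u w : S), (G.induce S).Walk u w → ∀ (x y z : ℝ),
      x ∈ Icc (l u.1) (r u.1) → y ∈ Icc (l w.1) (r w.1) → x ≤ z → z ≤ y →
      ∃ v ∈ S, z ∈ Icc (l v) (r v) := by
  intro u w p
  induction p with
  | @nil a =>
    intro x y z hx hy hxz hzy
    exact ⟨a.1, a.2, ⟨hx.1.trans hxz, hzy.trans hy.2⟩⟩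
  | @cons a b c h p ih =>
    intro x y z hx hy hxz hzy
    by_cases hz : z ≤ r a.1
    · exact ⟨a.1, a.2, ⟨hx.1.trans hxz, hz⟩⟩
    · push_neg at hz
      have hG : G.Adj a.1 b.1 := h
      have hne : a.1 ≠ b.1 := hG.ne
      obtain ⟨q, hqa, hqb⟩ := (hadj a.1 b.1 hne).mp hG
      exact ih q y z hqb hy (hqa.2.trans hz.le) hzy

/-- In an interval representation, the union of the intervals of a nonempty
vertex set inducing a connected subgraph is an order-connected subset of `ℝ`. -/
theorem connected_set_union_ordConnected
    {V : Type*} [Fintype V] (G : SimpleGraph V)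
    (l r : V → ℝ)
    (hlr : ∀ v, l v ≤ r v)
    (hadj : ∀ u v, u ≠ v → (G.Adj u v ↔ (Icc (l u) (r u) ∩ Icc (l v) (r v)).Nonempty))
    (S : Set V) (hSne : S.Nonempty) (hconn : (G.induce S).Connected) :
    ∀ x ∈ ⋃ v ∈ S, Icc (l v) (r v), ∀ y ∈ ⋃ v ∈ S, Icc (l v) (r v),
      ∀ z : ℝ, x ≤ z → z ≤ y → z ∈ ⋃ v ∈ S, Icc (l v) (r v) := by
  intro x hx y hy z hxz hzy
  simp only [mem_iUnion, exists_prop] at hx hy ⊢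
  obtain ⟨u, huS, hxu⟩ := hx
  obtain ⟨w, hwS, hyw⟩ := hy
  obtain ⟨p⟩ := hconn.preconnected ⟨u, huS⟩ ⟨w, hwS⟩
  exact walk_union_aux G l r hadj S ⟨u, huS⟩ ⟨w, hwS⟩ p x y z hxu hyw hxz hzy
end
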